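/- arXiv:2103.00079 — 3 statements merged into one kernel-verified Lean document; each statement's English description precedes it below -/
import Mathlib

section
/- Let K ≥ 2, m ≥ 1, λ ≥ 1 be integers and M = λm. Let A, β, δ > 0 satisfy β + A/δ ≤ K, let 𝒜 := δ(𝒵_K + i𝒵_K), and let H be the M×M matrix with H_{jj} = 1 for all j, H_{j,j−m} = −β for m < j ≤ M, and all other entries 0. Then for every y ∈ ℂ^M with ‖y‖_∞ ≤ A there exist q ∈ 𝒜^M and u ∈ ℂ^M with ‖u‖_∞ ≤ √2·δ such that y − q = Hu. -/
/-
Greedy noise shaping.  With `v j = y j + β u (j - m)` (the feedback term absent for `j < m`),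
let `q j` round the real and imaginary parts of `v j` separately to the nearest points of
`δ 𝒵_K`, and `u j = v j - q j`; then `y - q = H u` is this recursion.  Rounding to `δ 𝒵_K`
has error at most `δ` in each coordinate on `[-K δ, K δ]`, so inductively both parts of `u j`
are at most `δ`: the parts of `v j` are at most `A + β δ ≤ K δ`.  Hence `‖u j‖ ≤ √2 δ`.
-/

open scoped Real
open Complex

set_option linter.unusedVariables false

noncomputable section

/-- Wrap-around distance on `ℝ` (distance to the nearest integer). -/
def distT (t : ℝ) : ℝ := ⨅ n : ℤ, |t - (n : ℝ)|

/-- Euclidean norm of a complex vector. -/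
def norm2 {n : ℕ} (y : Fin n → ℂ) : ℝ := Real.sqrt (∑ i, ‖y i‖ ^ 2)

/-- Total variation norm of the atomic measure with amplitudes `a`. -/
def tvNorm {R : ℕ} (a : Fin R → ℂ) : ℝ := ∑ j, ‖a j‖

/-- First `M` Fourier coefficients of the atomic measure `∑ j, a j • δ_{t j}`. -/
def fourierCoeffs (M : ℕ) {R : ℕ} (a : Fin R → ℂ) (t : Fin R → ℝ) : Fin M → ℂ :=
  fun k => ∑ j, a j * Complex.exp (-2 * (Real.pi : ℂ) * Complex.I * ((k : ℕ) : ℂ) * ((t j : ℝ) : ℂ))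

/-- The function `w(t) = ∑_{k<λ} β^{-k} e^{-2πikt}`. -/
def wFun (β : ℝ) (lam : ℕ) (t : ℝ) : ℂ :=
  ∑ k ∈ Finset.range lam, ((β : ℂ))⁻¹ ^ k * Complex.exp (-2 * (Real.pi : ℂ) * Complex.I * (k : ℂ) * (t : ℂ))

/-- Condensation matrix `V = [I_m, β⁻¹ I_m, …, β^{-(λ-1)} I_m]`. -/
def Vmat (β : ℝ) (m lam : ℕ) : Matrix (Fin m) (Fin (lam * m)) ℂ :=
  Matrix.of fun i j => if (j : ℕ) % m = (i : ℕ) then ((β : ℂ))⁻¹ ^ ((j : ℕ) / m) else 0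

/-- Noise-shaping matrix `H` with `1` on the diagonal and `-β` on the `m`-th subdiagonal. -/
def Hmat (β : ℝ) (m M : ℕ) : Matrix (Fin M) (Fin M) ℂ :=
  Matrix.of fun j k => if (j : ℕ) = (k : ℕ) then 1 else if (j : ℕ) = (k : ℕ) + m then -(β : ℂ) else 0

/-- `𝒵_K = {-K+1, -K+3, …, K-1}`. -/
def ZK (K : ℕ) : Set ℤ := {n | ∃ k : ℕ, k < K ∧ n = -(K : ℤ) + 1 + 2 * (k : ℤ)}

/-- The Cartesian alphabet `𝒜 = δ(𝒵_K + i𝒵_K)`. -/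
def alphabet (K : ℕ) (δ : ℝ) : Set ℂ :=
  {z | ∃ a b : ℤ, a ∈ ZK K ∧ b ∈ ZK K ∧ z = (δ : ℂ) * ((a : ℂ) + (b : ℂ) * Complex.I)}

/-- `L` is a Lipschitz bound for `φ` with respect to the wrap-around distance. -/
def LipBnd (φ : ℝ → ℂ) (L : ℝ) : Prop := ∀ s t : ℝ, ‖φ s - φ t‖ ≤ L * distT (s - t)

/-- Lipschitz seminorm `|φ|_Lip` with respect to the wrap-around distance. -/
def lipSemi (φ : ℝ → ℂ) : ℝ := sInf {L : ℝ | 0 ≤ L ∧ LipBnd φ L}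

/-- Sup norm of `φ`. -/
def supNorm (φ : ℝ → ℂ) : ℝ := sSup {x : ℝ | ∃ t : ℝ, x = ‖φ t‖}

/-- Lipschitz norm `‖φ‖_Lip = max(‖φ‖_∞, |φ|_Lip)`. -/
def lipNorm (φ : ℝ → ℂ) : ℝ := max (supNorm φ) (lipSemi φ)

/-- Dual Lipschitz norm `‖ρ‖_{Lip*}` of the atomic measure `ρ = ∑ j, u j • δ_{r j}`. -/
def lipStar {R : ℕ} (u : Fin R → ℂ) (r : Fin R → ℝ) : ℝ :=
  sSup {x : ℝ | ∃ φ : ℝ → ℂ, lipNorm φ ≤ 1 ∧ x = ‖∑ j, u j * φ (r j)‖}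

/-- `𝓔_Lip(ρ,ν)` for atomic measures. -/
def ELip {R S : ℕ} (u : Fin R → ℂ) (r : Fin R → ℝ) (v : Fin S → ℂ) (s : Fin S → ℝ) : ℝ :=
  sSup {x : ℝ | ∃ φ : ℝ → ℂ, lipNorm φ ≤ 1 ∧
    x = ‖(∑ j, u j * φ (r j)) - (∑ k, v k * φ (s k))‖}

open scoped Classical in
/-- The neighborhood index set `𝓘_j^M`. -/
def nearIdx {R S : ℕ} (r : Fin R → ℝ) (s : Fin S → ℝ) (M : ℕ) (j : Fin R) : Finset (Fin S) :=
  Finset.univ.filter fun k => distT (r j - s k) ≤ 0.3298 / ((M : ℝ) - 1)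

open scoped Classical in
/-- The residual index set `𝓘_0^M`. -/
def farIdx {R S : ℕ} (r : Fin R → ℝ) (s : Fin S → ℝ) (M : ℕ) : Finset (Fin S) :=
  Finset.univ.filter fun k => ∀ j : Fin R, k ∉ nearIdx r s M j

/-- Amplitude error `𝓔_1^M(ρ,ν)`. -/
def E1 {R S : ℕ} (u : Fin R → ℂ) (r : Fin R → ℝ) (v : Fin S → ℂ) (s : Fin S → ℝ) (M : ℕ) : ℝ :=
  ⨆ j : Fin R, ‖u j - ∑ k ∈ nearIdx r s M j, v k‖

/-- Support error `𝓔_2^M(ρ,ν)`. -/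
def E2 {R S : ℕ} (u : Fin R → ℂ) (r : Fin R → ℝ) (v : Fin S → ℂ) (s : Fin S → ℝ) (M : ℕ) : ℝ :=
  ∑ j : Fin R, ∑ k ∈ nearIdx r s M j, ‖v k‖ * distT (r j - s k) ^ 2

/-- Spurious-atom error `𝓔_3^M(ρ,ν)`. -/
def E3 {R S : ℕ} (u : Fin R → ℂ) (r : Fin R → ℝ) (v : Fin S → ℂ) (s : Fin S → ℝ) (M : ℕ) : ℝ :=
  ∑ k ∈ farIdx r s M, ‖v k‖

/-- Mixed `ℓ∞ + ℓ²` error `𝓔^π_{∞,2}(ρ,ν)` for a permutation `π`. -/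
def EInf2 {S : ℕ} (u : Fin S → ℂ) (r : Fin S → ℝ) (v : Fin S → ℂ) (s : Fin S → ℝ)
    (σ : Equiv.Perm (Fin S)) : ℝ :=
  (⨆ j, distT (r j - s (σ j))) +
    Real.sqrt (∑ j, ‖u j - v (σ j)‖ ^ 2) / Real.sqrt (∑ j, ‖u j‖ ^ 2)

end

-- A point of `𝒵_K` nearest to `s`.
noncomputable def roundZK (K : ℕ) (s : ℝ) : ℤ :=
  -(K : ℤ) + 1 + 2 * (min (K - 1) ⌊(s + K) / 2⌋₊ : ℕ)

theorem roundZK_mem {K : ℕ} (hK : 1 ≤ K) (s : ℝ) : roundZK K s ∈ ZK K :=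
  ⟨_, by omega, rfl⟩

theorem abs_sub_roundZK_le {K : ℕ} {s : ℝ} (hs : |s| ≤ K) : |s - roundZK K s| ≤ 1 := by
  obtain ⟨hs₁, hs₂⟩ := abs_le.mp hs
  set t := (s + K) / 2 with ht
  set k := min (K - 1) ⌊t⌋₊
  have hkt : (k : ℝ) ≤ t :=
    (Nat.cast_le.mpr (min_le_right _ _)).trans (Nat.floor_le (by linarith))
  have htk : t ≤ k + 1 := by
    rcases min_choice (K - 1) ⌊t⌋₊ with hk | hk <;> simp only [k, hk]
    · have : (K : ℝ) ≤ ((K - 1 : ℕ) : ℝ) + 1 := by exact_mod_cast (by omega : K ≤ K - 1 + 1)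
      linarith
    · exact (Nat.lt_floor_add_one t).le
  have : s - roundZK K s = 2 * (t - k) - 1 := by
    simp only [roundZK, ht, k]; push_cast; ring
  rw [this, abs_le]; constructor <;> linarith

noncomputable def quantizeZK (K : ℕ) (δ x : ℝ) : ℝ := δ * roundZK K (x / δ)

theorem abs_sub_quantizeZK_le {K : ℕ} {δ x : ℝ} (hδ : 0 < δ) (hx : |x| ≤ K * δ) :
    |x - quantizeZK K δ x| ≤ δ := by
  have hxδ : |x / δ| ≤ K := by rwa [abs_div, abs_of_pos hδ, div_le_iff₀ hδ]
  calc |x - quantizeZK K δ x| = |δ * (x / δ - roundZK K (x / δ))| := by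
        rw [mul_sub, mul_div_cancel₀ _ hδ.ne', quantizeZK]
    _ = δ * |x / δ - roundZK K (x / δ)| := by rw [abs_mul, abs_of_pos hδ]
    _ ≤ δ * 1 := by gcongr; exact abs_sub_roundZK_le hxδ
    _ = δ := mul_one δ

theorem norm_sub_prodMap_quantizeZK_le {K : ℕ} {δ : ℝ} (hδ : 0 < δ) {p : ℝ × ℝ}
    (hp : ‖p‖ ≤ K * δ) : ‖p - Prod.map (quantizeZK K δ) (quantizeZK K δ) p‖ ≤ δ := by
  rw [norm_prod_le_iff] at hp ⊢
  exact ⟨abs_sub_quantizeZK_le hδ hp.1, abs_sub_quantizeZK_le hδ hp.2⟩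

theorem equivRealProd_symm_prodMap_quantizeZK_mem {K : ℕ} (hK : 1 ≤ K) (δ : ℝ) (p : ℝ × ℝ) :
    equivRealProd.symm (Prod.map (quantizeZK K δ) (quantizeZK K δ) p) ∈ alphabet K δ := by
  refine ⟨_, _, roundZK_mem hK (p.1 / δ), roundZK_mem hK (p.2 / δ), ?_⟩
  simp only [equivRealProd_symm_apply, Prod.map_fst, Prod.map_snd, quantizeZK]
  push_cast
  ring

theorem norm_equivRealProd_symm_le (p : ℝ × ℝ) :
    ‖equivRealProd.symm p‖ ≤ √2 * ‖p‖ := by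
  simpa [Prod.norm_def] using norm_le_sqrt_two_mul_max (equivRealProd.symm p)

section NoiseShaping

variable {𝕜 E : Type*}

section Algebra

variable [Semiring 𝕜] [AddCommGroup E] [Module 𝕜 E]

def noiseShapingState (Q : E → E) (β : 𝕜) (m : ℕ) (y : ℕ → E) (j : ℕ) : E :=
  let v := y j + if 0 < m ∧ m ≤ j then β • noiseShapingState Q β m y (j - m) else 0
  v - Q v
termination_by j
decreasing_by omega

def noiseShapingInput (Q : E → E) (β : 𝕜) (m : ℕ) (y : ℕ → E) (j : ℕ) : E :=
  y j + if 0 < m ∧ m ≤ j then β • noiseShapingState Q β m y (j - m) else 0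

theorem noiseShapingState_eq (Q : E → E) (β : 𝕜) (m : ℕ) (y : ℕ → E) (j : ℕ) :
    noiseShapingState Q β m y j =
      noiseShapingInput Q β m y j - Q (noiseShapingInput Q β m y j) := by
  rw [noiseShapingState, noiseShapingInput]

theorem sub_quantize_noiseShapingInput (Q : E → E) (β : 𝕜) (m : ℕ) (y : ℕ → E) (j : ℕ) :
    y j - Q (noiseShapingInput Q β m y j) = noiseShapingState Q β m y j -
      if 0 < m ∧ m ≤ j then β • noiseShapingState Q β m y (j - m) else 0 := by
  rw [noiseShapingState_eq, noiseShapingInput]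
  abel

end Algebra

-- Inductively, the quantizer input `y j + β • u (j - m)` has norm at most `A + ‖β‖ δ ≤ C`.
theorem norm_noiseShapingState_le [NormedField 𝕜] [SeminormedAddCommGroup E]
    [NormedSpace 𝕜 E] {Q : E → E} {β : 𝕜} {m N : ℕ} {y : ℕ → E} {A C δ : ℝ}
    (hQ : ∀ v, ‖v‖ ≤ C → ‖v - Q v‖ ≤ δ) (hy : ∀ j < N, ‖y j‖ ≤ A) (hδ : 0 ≤ δ)
    (hAC : A + ‖β‖ * δ ≤ C) : ∀ j < N, ‖noiseShapingState Q β m y j‖ ≤ δ := by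
  intro j
  induction j using Nat.strong_induction_on with
  | _ j ih =>
    intro hj
    rw [noiseShapingState_eq]
    refine hQ _ ?_
    rw [noiseShapingInput]
    split_ifs with h
    · calc ‖y j + β • noiseShapingState Q β m y (j - m)‖
          ≤ ‖y j‖ + ‖β‖ * ‖noiseShapingState Q β m y (j - m)‖ := by
            grw [norm_add_le, norm_smul_le]
        _ ≤ A + ‖β‖ * δ := by gcongr; exacts [hy j hj, ih _ (by omega) (by omega)]
        _ ≤ C := hAC
    · rw [add_zero]
      exact (hy j hj).trans ((le_add_of_nonneg_right (by positivity)).trans hAC)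

end NoiseShaping

theorem Hmat_mulVec_apply (β : ℝ) (m M : ℕ) (u : ℕ → ℂ) (j : Fin M) :
    (Hmat β m M).mulVec (fun k => u k) j =
      u j - if 0 < m ∧ m ≤ j then (β : ℂ) * u (j - m) else 0 := by
  have hentry : ∀ k : Fin M, Hmat β m M j k * u k = (if (k : ℕ) = j then u k else 0) -
      if 0 < m ∧ m ≤ j ∧ (k : ℕ) = j - m then (β : ℂ) * u k else 0 := by
    intro k
    simp only [Hmat, Matrix.of_apply]
    split_ifs <;> first | (exfalso; omega) | ring
  simp only [Matrix.mulVec, dotProduct, hentry, Finset.sum_sub_distrib]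
  rw [Fin.sum_univ_eq_sum_range (fun k => if k = (j : ℕ) then u k else 0),
    Fin.sum_univ_eq_sum_range (fun k => if 0 < m ∧ m ≤ j ∧ k = j - m then (β : ℂ) * u k else 0)]
  have hjm : (j : ℕ) - m < M := by omega
  simp [Finset.sum_ite_eq', ite_and, hjm]

theorem statement0_general (K m M : ℕ) (hK : 2 ≤ K) (A β δ : ℝ) (hβ : 0 < β) (hδ : 0 < δ)
    (hparam : β + A / δ ≤ (K : ℝ))
    (y : Fin M → ℂ) (hy : ∀ j, ‖y j‖ ≤ A) :
    ∃ q u : Fin M → ℂ,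
      (∀ j, q j ∈ alphabet K δ) ∧
      (∀ j, ‖u j‖ ≤ Real.sqrt 2 * δ) ∧
      y - q = (Hmat β m M).mulVec u := by
  set e := equivRealProdCLM
  set Q := Prod.map (quantizeZK K δ) (quantizeZK K δ)
  set y' : ℕ → ℝ × ℝ := fun n => if h : n < M then e (y ⟨n, h⟩) else 0
  have hy' : ∀ j < M, ‖y' j‖ ≤ A := fun j hj => by
    simp only [y', dif_pos hj]
    exact (equivRealProd_apply_le _).trans (hy ⟨j, hj⟩)
  have hAK : A + ‖β‖ * δ ≤ K * δ := by
    have h := (div_le_iff₀ hδ).mp (le_sub_iff_add_le'.mpr hparam)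
    rw [Real.norm_of_nonneg hβ.le]
    linarith [sub_mul (K : ℝ) β δ]
  have hu := norm_noiseShapingState_le (m := m)
    (fun _ => norm_sub_prodMap_quantizeZK_le (K := K) hδ) hy' hδ.le hAK
  refine ⟨fun j => e.symm (Q (noiseShapingInput Q β m y' j)),
    fun j => e.symm (noiseShapingState Q β m y' j), fun j => ?_, fun j => ?_, ?_⟩
  · exact equivRealProd_symm_prodMap_quantizeZK_mem (by omega) δ _
  · exact (norm_equivRealProd_symm_le _).trans (by gcongr; exact hu j j.isLt)
  · ext j
    rw [Hmat_mulVec_apply β m M (fun n => e.symm (noiseShapingState Q β m y' n)), Pi.sub_apply]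
    have hyj : y j = e.symm (y' j) := by
      simp only [y', dif_pos j.isLt, Fin.eta, ContinuousLinearEquiv.symm_apply_apply]
    rw [hyj, ← map_sub, sub_quantize_noiseShapingInput, map_sub]
    split_ifs <;> simp [real_smul]

/-- existence of the noise-shaping quantizer (Lemma, special case of
Chou–Güntürk): for `β + A/δ ≤ K` and any `y` with `‖y‖_∞ ≤ A` there are `q ∈ 𝒜^M` and
`u` with `‖u‖_∞ ≤ √2 δ` such that `y - q = H u`. -/
theorem statement0 (K m lam M : ℕ) (hK : 2 ≤ K) (hm : 1 ≤ m) (hlam : 1 ≤ lam)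
    (hM : M = lam * m) (A β δ : ℝ) (hA : 0 < A) (hβ : 0 < β) (hδ : 0 < δ)
    (hparam : β + A / δ ≤ (K : ℝ))
    (y : Fin M → ℂ) (hy : ∀ j, ‖y j‖ ≤ A) :
    ∃ q u : Fin M → ℂ,
      (∀ j, q j ∈ alphabet K δ) ∧
      (∀ j, ‖u j‖ ≤ Real.sqrt 2 * δ) ∧
      y - q = (Hmat β m M).mulVec u :=
  statement0_general K m M hK A β δ hβ hδ hparam y hy
end

section
/- Let β > 1 be real and λ ≥ 1 an integer, and define w(t) := Σ_{k=0}^{λ−1} β^{−k} e^{−2πikt} and C_β := (β+1)/(β−1). Then for all s, t ∈ ℝ, |1/w(s) − 1/w(t)| ≤ C_β² · (4πλβ/(β−1)²) · |s − t|_𝕋, where |t|_𝕋 := min_{n∈ℤ} |t − n|. -/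
open scoped Real
open Complex

set_option linter.unusedVariables false

/-! With `z = β⁻¹ e^{-2πit}`, `w(t) = ∑_{k<λ} z^k = (z^λ - 1)/(z - 1)` and `‖z‖ = β⁻¹`, so
`‖w(t)‖ ≥ (1 - β⁻¹)/(1 + β⁻¹) = 1/C_β`. The `k`-th term of `w` is `2πkβ^{-k}`-Lipschitz for the
wrap-around distance, and `∑ k β^{-k} ≤ β/(β-1)²`. Finally `‖a⁻¹ - b⁻¹‖ = ‖a - b‖/(‖a‖‖b‖)`. -/

lemma distT_eq_norm_coe (x : ℝ) : distT x = ‖(x : UnitAddCircle)‖ := by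
  rw [UnitAddCircle.norm_eq]
  exact le_antisymm (ciInf_le ⟨0, by rintro _ ⟨n, rfl⟩; exact abs_nonneg _⟩ (round x))
    (le_ciInf (round_le x))

lemma distT_nonneg (x : ℝ) : 0 ≤ distT x := by
  rw [distT_eq_norm_coe]
  exact norm_nonneg _

lemma norm_cexp_sub_cexp_le (k : ℕ) (s t : ℝ) :
    ‖Complex.exp (-2 * π * I * k * s) - Complex.exp (-2 * π * I * k * t)‖ ≤
      2 * π * k * distT (s - t) := by
  set d := s - t - round (s - t)
  -- `s` and `t + d` differ by an integer, which the character `e^{-2πik·}` does not see.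
  have hperiod : Complex.exp (-2 * π * I * k * s) =
      Complex.exp (-2 * π * I * k * t) * Complex.exp (I * ↑(-2 * π * k * d)) := by
    rw [← Complex.exp_add, Complex.exp_eq_exp_iff_exists_int]
    exact ⟨-(k * round (s - t)), by simp only [d]; push_cast; ring⟩
  have hunit : ‖Complex.exp (-2 * π * I * k * t)‖ = 1 := by
    rw [Complex.norm_exp]; simp
  calc _ = ‖Complex.exp (I * ↑(-2 * π * k * d)) - 1‖ := by
        rw [hperiod, ← mul_sub_one, norm_mul, hunit, one_mul]
    _ ≤ ‖-2 * π * k * d‖ := Real.norm_exp_I_mul_ofReal_sub_one_le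
    _ = 2 * π * k * distT (s - t) := by
        rw [distT_eq_norm_coe, UnitAddCircle.norm_eq, Real.norm_eq_abs, abs_mul,
          abs_of_nonpos (by nlinarith [Real.pi_pos] : -2 * π * (k : ℝ) ≤ 0)]
        ring

lemma sum_range_natCast_mul_pow_le {r : ℝ} (hr₀ : 0 ≤ r) (hr₁ : r < 1) (n : ℕ) :
    ∑ k ∈ Finset.range n, (k : ℝ) * r ^ k ≤ r / (1 - r) ^ 2 :=
  sum_le_hasSum _ (fun k _ => by positivity)
    (hasSum_coe_mul_geometric_of_norm_lt_one (by rwa [Real.norm_of_nonneg hr₀]))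

lemma one_sub_div_one_add_le_norm_geom_sum {R : Type*} [NormedRing R] [NormOneClass R] {z : R}
    (hz : ‖z‖ ≤ 1) {n : ℕ} (hn : 1 ≤ n) :
    (1 - ‖z‖) / (1 + ‖z‖) ≤ ‖∑ k ∈ Finset.range n, z ^ k‖ := by
  have hnum : 1 - ‖z‖ ≤ ‖z ^ n - 1‖ := by
    have hpow : ‖z ^ n‖ ≤ ‖z‖ :=
      (norm_pow_le' z hn).trans (pow_le_of_le_one (norm_nonneg z) hz (by omega))
    have := norm_sub_norm_le (1 : R) (z ^ n)
    rw [norm_one, norm_sub_rev] at this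
    linarith
  have hden : ‖z - 1‖ ≤ 1 + ‖z‖ := (norm_sub_le z 1).trans_eq (by rw [norm_one, add_comm])
  rw [div_le_iff₀ (by positivity)]
  calc 1 - ‖z‖ ≤ ‖z ^ n - 1‖ := hnum
    _ = ‖(∑ k ∈ Finset.range n, z ^ k) * (z - 1)‖ := by rw [geom_sum_mul]
    _ ≤ ‖∑ k ∈ Finset.range n, z ^ k‖ * (1 + ‖z‖) :=
        (norm_mul_le _ _).trans (by gcongr)

section wFun

variable {β : ℝ} (lam : ℕ)

lemma wFun_eq_geom_sum (t : ℝ) :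
    wFun β lam t = ∑ k ∈ Finset.range lam, ((β : ℂ)⁻¹ * Complex.exp (-2 * π * I * t)) ^ k := by
  refine Finset.sum_congr rfl fun k _ => ?_
  rw [mul_pow, ← Complex.exp_nat_mul]
  ring_nf

lemma div_le_norm_wFun (hβ : 1 < β) (hlam : 1 ≤ lam) (t : ℝ) :
    (β - 1) / (β + 1) ≤ ‖wFun β lam t‖ := by
  have hβ₀ : 0 < β := by linarith
  have hz : ‖(β : ℂ)⁻¹ * Complex.exp (-2 * π * I * t)‖ = β⁻¹ := by
    rw [norm_mul, norm_inv, Complex.norm_real, Real.norm_of_nonneg hβ₀.le, Complex.norm_exp]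
    simp
  have hbound := one_sub_div_one_add_le_norm_geom_sum (hz.trans_le (inv_le_one_of_one_le₀ hβ.le))
    hlam
  rwa [hz, ← wFun_eq_geom_sum, show (1 - β⁻¹) / (1 + β⁻¹) = (β - 1) / (β + 1) by
    field_simp] at hbound

lemma norm_wFun_sub_le (hβ : 1 < β) (s t : ℝ) :
    ‖wFun β lam s - wFun β lam t‖ ≤ 2 * π * (β / (β - 1) ^ 2) * distT (s - t) := by
  have hβ₀ : 0 < β := by linarith
  have hsum : ∑ k ∈ Finset.range lam, (k : ℝ) * β⁻¹ ^ k ≤ β / (β - 1) ^ 2 := by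
    refine (sum_range_natCast_mul_pow_le (by positivity) (inv_lt_one_of_one_lt₀ hβ) lam).trans_eq ?_
    field_simp
  calc ‖wFun β lam s - wFun β lam t‖
      = ‖∑ k ∈ Finset.range lam, (β : ℂ)⁻¹ ^ k *
          (Complex.exp (-2 * π * I * k * s) - Complex.exp (-2 * π * I * k * t))‖ := by
        simp only [wFun, ← Finset.sum_sub_distrib, mul_sub]
    _ ≤ ∑ k ∈ Finset.range lam, β⁻¹ ^ k * (2 * π * k * distT (s - t)) := by
        refine (norm_sum_le _ _).trans (Finset.sum_le_sum fun k _ => ?_)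
        rw [norm_mul, norm_pow, norm_inv, Complex.norm_real, Real.norm_of_nonneg hβ₀.le]
        gcongr
        exact norm_cexp_sub_cexp_le k s t
    _ = (∑ k ∈ Finset.range lam, (k : ℝ) * β⁻¹ ^ k) * (2 * π * distT (s - t)) := by
        rw [Finset.sum_mul]
        exact Finset.sum_congr rfl fun k _ => by ring
    _ ≤ β / (β - 1) ^ 2 * (2 * π * distT (s - t)) := by
        have := distT_nonneg (s - t)
        gcongr
    _ = 2 * π * (β / (β - 1) ^ 2) * distT (s - t) := by ring

end wFun

lemma norm_inv_sub_inv_le {𝕜 : Type*} [NormedDivisionRing 𝕜] {a b : 𝕜} {c : ℝ} (hc : 0 < c)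
    (ha : c ≤ ‖a‖) (hb : c ≤ ‖b‖) : ‖a⁻¹ - b⁻¹‖ ≤ ‖a - b‖ / c ^ 2 := by
  have ha₀ : a ≠ 0 := norm_pos_iff.mp (hc.trans_le ha)
  have hb₀ : b ≠ 0 := norm_pos_iff.mp (hc.trans_le hb)
  rw [inv_sub_inv' ha₀ hb₀, norm_mul, norm_mul, norm_inv, norm_inv, norm_sub_rev b a,
    le_div_iff₀ (by positivity)]
  calc ‖a‖⁻¹ * ‖a - b‖ * ‖b‖⁻¹ * c ^ 2 = ‖a - b‖ * (c / ‖a‖) * (c / ‖b‖) := by ring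
    _ ≤ ‖a - b‖ * 1 * 1 := by
        gcongr
        · exact div_le_one_of_le₀ ha (norm_nonneg a)
        · exact div_le_one_of_le₀ hb (norm_nonneg b)
    _ = ‖a - b‖ := by ring

/-- `1/w` is Lipschitz with constant `C_β² · 4πλβ/(β-1)²` with respect to
the wrap-around distance. -/
theorem statement4 (β : ℝ) (hβ : 1 < β) (lam : ℕ) (hlam : 1 ≤ lam) (s t : ℝ) :
    ‖(wFun β lam s)⁻¹ - (wFun β lam t)⁻¹‖ ≤
      ((β + 1) / (β - 1)) ^ 2 * (4 * Real.pi * (lam : ℝ) * β / (β - 1) ^ 2) * distT (s - t) := by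
  have hβ₁ : 0 < β - 1 := by linarith
  have hlam' : (1 : ℝ) ≤ lam := by exact_mod_cast hlam
  have hd := distT_nonneg (s - t)
  calc ‖(wFun β lam s)⁻¹ - (wFun β lam t)⁻¹‖
      ≤ ‖wFun β lam s - wFun β lam t‖ / ((β - 1) / (β + 1)) ^ 2 :=
        norm_inv_sub_inv_le (by positivity) (div_le_norm_wFun lam hβ hlam s)
          (div_le_norm_wFun lam hβ hlam t)
    _ ≤ 2 * π * (β / (β - 1) ^ 2) * distT (s - t) / ((β - 1) / (β + 1)) ^ 2 := by
        gcongr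
        exact norm_wFun_sub_le lam hβ s t
    _ = ((β + 1) / (β - 1)) ^ 2 * (2 * π * (β / (β - 1) ^ 2)) * distT (s - t) := by
        rw [div_eq_mul_inv _ (_ ^ 2), ← inv_pow, inv_div]
        ring
    _ ≤ ((β + 1) / (β - 1)) ^ 2 * (4 * π * lam * β / (β - 1) ^ 2) * distT (s - t) := by
        have hconst : 2 * π ≤ 4 * π * lam := by nlinarith [Real.pi_pos]
        rw [mul_div_assoc _ β]
        gcongr
end

section
/- Let β > 1, let m, λ ≥ 1 be integers, and M = λm. Let V := [I_m, β^{−1}I_m, …, β^{−(λ−1)}I_m] be the m×M matrix of λ horizontal blocks, and let H be the M×M matrix with H_{jj} = 1 for all j, H_{j,j−m} = −β for m < j ≤ M, and all other entries 0. Then ‖VH‖_{∞→2} = √m · β^{−(λ−1)}. -/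
open scoped Real
open Complex

set_option linter.unusedVariables false

/-! Column `k` of `H` is `e_k - β e_{k+m}` and `V` weights block `q` by `β^{-q}`, so the
contributions of consecutive blocks cancel and `VH = β^{-(λ-1)} [0, …, 0, I_m]`. Hence `VHu` is
`β^{-(λ-1)}` times the last block of `u`, whose Euclidean norm is at most `√m` when `‖u‖_∞ ≤ 1`,
with equality at the all-ones vector. -/

lemma Hmat_apply_eq_sub (β : ℝ) {m M : ℕ} (hm : 0 < m) (j k : Fin M) :
    Hmat β m M j k = (if (j : ℕ) = k then 1 else 0) - β * (if (j : ℕ) = k + m then 1 else 0) := by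
  simp only [Hmat, Matrix.of_apply]
  split_ifs <;> first | omega | ring

lemma Vmat_mul_Hmat_apply {β : ℝ} (hβ : β ≠ 0) {m lam : ℕ} (i : Fin m) (k : Fin (lam * m)) :
    (Vmat β m lam * Hmat β m (lam * m)) i k =
      if (k : ℕ) = (lam - 1) * m + i then (β : ℂ)⁻¹ ^ (lam - 1) else 0 := by
  have hm : 0 < m := i.pos
  have hβ' : (β : ℂ) ≠ 0 := Complex.ofReal_ne_zero.mpr hβ
  set g : ℕ → ℂ := fun n => if n % m = i then (β : ℂ)⁻¹ ^ (n / m) else 0 with hg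
  have hshift : ∀ n, (β : ℂ) * g (n + m) = g n := by
    intro n
    simp only [hg, Nat.add_mod_right, Nat.add_div_right _ hm, pow_succ]
    split_ifs
    · field_simp
    · simp
  have hsum : (Vmat β m lam * Hmat β m (lam * m)) i k =
      g k - if (k : ℕ) + m < lam * m then g k else 0 := by
    have hV : ∀ j, Vmat β m lam i j = g j := fun j => rfl
    simp only [Matrix.mul_apply, hV, Hmat_apply_eq_sub β hm]
    rw [Fin.sum_univ_eq_sum_range (fun j => g j * ((if j = (k : ℕ) then 1 else 0) -
      β * if j = (k : ℕ) + m then 1 else 0))]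
    simp [mul_sub, Finset.sum_sub_distrib, k.isLt, mul_comm _ (β : ℂ), hshift]
  have hlam : 0 < lam := Nat.pos_of_mul_pos_right k.pos
  have hsplit : (lam - 1) * m + m = lam * m := by
    rw [← Nat.add_one_mul, Nat.sub_one_add_one hlam.ne']
  rw [hsum]
  by_cases hlast : (k : ℕ) + m < lam * m
  · rw [if_pos hlast, sub_self, if_neg (by omega)]
  · have hq : (k : ℕ) / m = lam - 1 :=
      Nat.div_eq_of_lt_le (by omega) (by rw [Nat.sub_add_cancel hlam]; exact k.isLt)
    have hr := Nat.div_add_mod (k : ℕ) m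
    rw [hq, Nat.mul_comm] at hr
    have hlast_iff : (k : ℕ) % m = i ↔ (k : ℕ) = (lam - 1) * m + i := by omega
    rw [if_neg hlast, sub_zero, hg]
    simp only [hq, hlast_iff]

def lastBlockIdx {m lam : ℕ} (hlam : 1 ≤ lam) (i : Fin m) : Fin (lam * m) :=
  ⟨(lam - 1) * m + i, by
    rw [← Nat.sub_one_add_one_eq_of_pos hlam, Nat.add_one_mul, Nat.sub_add_cancel hlam]
    omega⟩

lemma Vmat_mul_Hmat_mulVec_apply {β : ℝ} (hβ : β ≠ 0) {m lam : ℕ} (hlam : 1 ≤ lam)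
    (u : Fin (lam * m) → ℂ) (i : Fin m) :
    (Vmat β m lam * Hmat β m (lam * m)).mulVec u i =
      (β : ℂ)⁻¹ ^ (lam - 1) * u (lastBlockIdx hlam i) := by
  have hk : ∀ k : Fin (lam * m), (k : ℕ) = (lam - 1) * m + i ↔ k = lastBlockIdx hlam i :=
    fun k => by rw [Fin.ext_iff]; rfl
  simp only [Matrix.mulVec, dotProduct, Vmat_mul_Hmat_apply hβ, hk, ite_mul, zero_mul,
    Finset.sum_ite_eq', Finset.mem_univ, if_true]

lemma norm2_le_of_forall_norm_le {n : ℕ} {y : Fin n → ℂ} {c : ℝ} (hc : 0 ≤ c)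
    (hy : ∀ i, ‖y i‖ ≤ c) : norm2 y ≤ Real.sqrt n * c := by
  calc norm2 y ≤ Real.sqrt (∑ _i : Fin n, c ^ 2) :=
        Real.sqrt_le_sqrt (Finset.sum_le_sum fun i _ => pow_le_pow_left₀ (norm_nonneg _) (hy i) 2)
    _ = Real.sqrt n * c := by
        rw [Finset.sum_const, Finset.card_univ, Fintype.card_fin, nsmul_eq_mul,
          Real.sqrt_mul (Nat.cast_nonneg n), Real.sqrt_sq hc]

lemma norm2_const (n : ℕ) (a : ℂ) : norm2 (fun _ : Fin n => a) = Real.sqrt n * ‖a‖ := by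
  rw [norm2, Finset.sum_const, Finset.card_univ, Fintype.card_fin, nsmul_eq_mul,
    Real.sqrt_mul (Nat.cast_nonneg n), Real.sqrt_sq (norm_nonneg a)]

theorem statement5_general (β : ℝ) (hβ : 1 < β) (m lam : ℕ) (hlam : 1 ≤ lam) :
    sSup {x : ℝ | ∃ u : Fin (lam * m) → ℂ, (∀ j, ‖u j‖ ≤ 1) ∧
        x = norm2 ((Vmat β m lam * Hmat β m (lam * m)).mulVec u)} =
      Real.sqrt (m : ℝ) * β ^ (-((lam : ℤ) - 1)) := by
  have hβ0 : 0 < β := by linarith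
  have hnorm : ‖(β : ℂ)⁻¹ ^ (lam - 1)‖ = β ^ (-((lam : ℤ) - 1)) := by
    rw [norm_pow, norm_inv, Complex.norm_of_nonneg hβ0.le, ← zpow_natCast, Nat.cast_sub hlam,
      inv_zpow', Nat.cast_one]
  have hVH := Vmat_mul_Hmat_mulVec_apply (m := m) hβ0.ne' hlam
  rw [← hnorm]
  refine IsGreatest.csSup_eq ⟨⟨fun _ => 1, fun _ => by simp, ?_⟩, ?_⟩
  · have hconst : (Vmat β m lam * Hmat β m (lam * m)).mulVec (fun _ => 1) =
        fun _ => (β : ℂ)⁻¹ ^ (lam - 1) := funext fun i => by rw [hVH, mul_one]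
    rw [hconst, norm2_const]
  · rintro x ⟨u, hu, rfl⟩
    refine norm2_le_of_forall_norm_le (norm_nonneg _) fun i => ?_
    rw [hVH, norm_mul]
    exact mul_le_of_le_one_right (norm_nonneg _) (hu _)

/-- `‖VH‖_{∞→2} = √m · β^{-(λ-1)}`. -/
theorem statement5 (β : ℝ) (hβ : 1 < β) (m lam : ℕ) (hm : 1 ≤ m) (hlam : 1 ≤ lam) :
    sSup {x : ℝ | ∃ u : Fin (lam * m) → ℂ, (∀ j, ‖u j‖ ≤ 1) ∧
        x = norm2 ((Vmat β m lam * Hmat β m (lam * m)).mulVec u)} =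
      Real.sqrt (m : ℝ) * β ^ (-((lam : ℤ) - 1)) :=
  statement5_general β hβ m lam hlam
end
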